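/- arXiv:2403.18429 — 2 statements merged into one kernel-verified Lean document; each statement's English description precedes it below -/
import Mathlib

section
/- There exists a finite simple connected graph G with at least two vertices such that μ(G) > max over all pairs of adjacent vertices v_i ~ v_j of G of (2·(m_i² + m_j²))/(d_i + d_j). (This disproves conjectured edge-maximum bound 36 of Brankov, Hansen and Stevanović.) -/
noncomputable section

open Finset

/-- The degree of a vertex, as a real number. -/
def degR {V : Type*} [Fintype V] (G : SimpleGraph V) (v : V) : ℝ :=
  letI := Classical.decRel G.Adj
  (G.degree v : ℝ)

/-- The average degree of the neighbours of a vertex, as a real number: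
`m_v = (∑_{u ~ v} d_u) / d_v`. -/
def avgDegR {V : Type*} [Fintype V] (G : SimpleGraph V) (v : V) : ℝ :=
  letI := Classical.decRel G.Adj
  (∑ u ∈ G.neighborFinset v, (G.degree u : ℝ)) / (G.degree v : ℝ)

/-- The largest eigenvalue of the Laplacian matrix `L = D - A` of a finite graph. -/
def lapSpecRad {V : Type*} [Fintype V] [DecidableEq V] [Nonempty V]
    (G : SimpleGraph V) : ℝ :=
  letI := Classical.decRel G.Adj
  ⨆ i, (SimpleGraph.posSemidef_lapMatrix ℝ G).isHermitian.eigenvalues i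

/-! The counterexample is the cone `K₁ ∨ H` over the `10`-regular circulant graph
`H = C₂₈(1, …, 5)`. If `r` is a universal vertex of an `n`-vertex graph, then `n • e_r - 1` is a
Laplacian eigenvector with eigenvalue `n`, so here `μ ≥ 29`. On the other hand the apex has
`d = 28, m = 11` and every other vertex has `d = 11, m = 138 / 11`, so the edge bound is about
`28.6` on the edges of `H` and about `14.3` on the edges at the apex. -/

open Matrix

theorem Matrix.IsHermitian.le_iSup_eigenvalues {𝕜 n : Type*} [RCLike 𝕜] [Fintype n]
    [DecidableEq n] {A : Matrix n n 𝕜} (hA : A.IsHermitian) {x : n → 𝕜} (hx : x ≠ 0) {μ : ℝ}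
    (h : A *ᵥ x = (μ : 𝕜) • x) : μ ≤ ⨆ i, hA.eigenvalues i := by
  have hμ : (μ : 𝕜) ∈ spectrum 𝕜 A := by
    rw [← spectrum_toLin']
    exact (Module.End.hasEigenvalue_of_hasEigenvector
      ⟨Module.End.mem_eigenspace_iff.mpr (by rwa [toLin'_apply]), hx⟩).mem_spectrum
  obtain ⟨_, ⟨i, rfl⟩, hi⟩ := hA.spectrum_eq_image_range ▸ hμ
  exact RCLike.ofReal_inj.mp hi ▸ le_ciSup (Set.finite_range _).bddAbove i

namespace SimpleGraph

variable {V : Type*}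

theorem degR_eq [Fintype V] (G : SimpleGraph V) [DecidableRel G.Adj] (v : V) :
    degR G v = G.degree v := by
  unfold degR; congr!

theorem avgDegR_eq [Fintype V] (G : SimpleGraph V) [DecidableRel G.Adj] (v : V) :
    avgDegR G v = (∑ u ∈ G.neighborFinset v, (G.degree u : ℝ)) / G.degree v := by
  unfold avgDegR; congr!

section Universal

variable [Fintype V] [DecidableEq V] {G : SimpleGraph V} {r : V}

theorem lapMatrix_mulVec_single_of_isUniversal [DecidableRel G.Adj] (hr : G.IsUniversal r) :
    G.lapMatrix ℝ *ᵥ Pi.single r 1 = (Fintype.card V : ℝ) • Pi.single r 1 - 1 := by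
  funext v
  rw [lapMatrix_mulVec_apply, sum_pi_single']
  by_cases hv : v = r
  · subst hv
    have hcard : 1 ≤ Fintype.card V := Fintype.card_pos_iff.mpr ⟨v⟩
    simp [(G.degree_eq_card_sub_one v).mpr hr, hcard]
  · simp [hv, (hr (Ne.symm hv)).symm]

theorem lapMatrix_mulVec_eq_card_smul_of_isUniversal [DecidableRel G.Adj]
    (hr : G.IsUniversal r) :
    G.lapMatrix ℝ *ᵥ ((Fintype.card V : ℝ) • Pi.single r 1 - 1) =
      (Fintype.card V : ℝ) • ((Fintype.card V : ℝ) • Pi.single r 1 - 1) := by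
  rw [mulVec_sub, mulVec_smul, lapMatrix_mulVec_single_of_isUniversal hr]
  exact sub_eq_self.mpr (lapMatrix_mulVec_const_eq_zero G)

theorem card_le_lapSpecRad_of_isUniversal [Nontrivial V] (hr : G.IsUniversal r) :
    (Fintype.card V : ℝ) ≤ lapSpecRad G := by
  let := Classical.decRel G.Adj
  refine IsHermitian.le_iSup_eigenvalues _ ?_ (lapMatrix_mulVec_eq_card_smul_of_isUniversal hr)
  obtain ⟨w, hw⟩ := exists_ne r
  intro h
  simpa [Pi.single_apply, hw] using congrFun h w

end Universal

/-- The cone `K₁ ∨ H`, with apex `none`. -/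
def cone (H : SimpleGraph V) : SimpleGraph (Option V) where
  Adj
    | none, none => False
    | some a, some b => H.Adj a b
    | _, _ => True
  symm := ⟨by rintro (_ | a) (_ | b) h <;> first | trivial | exact H.adj_symm h⟩
  loopless := ⟨by rintro (_ | a) h; exacts [h, H.loopless.irrefl a h]⟩

variable (H : SimpleGraph V)

instance [DecidableRel H.Adj] : DecidableRel (cone H).Adj
  | none, none => inferInstanceAs (Decidable False)
  | some a, some b => inferInstanceAs (Decidable (H.Adj a b))
  | none, some _ | some _, none => inferInstanceAs (Decidable True)

@[simp]
theorem cone_adj_none_none : ¬(cone H).Adj none none := id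

@[simp]
theorem cone_adj_none_some (a : V) : (cone H).Adj none (some a) := trivial

@[simp]
theorem cone_adj_some_none (a : V) : (cone H).Adj (some a) none := trivial

@[simp]
theorem cone_adj_some_some (a b : V) : (cone H).Adj (some a) (some b) ↔ H.Adj a b := Iff.rfl

theorem isUniversal_cone_none : (cone H).IsUniversal none := by
  rintro (_ | a) h <;> simp_all

variable [Fintype V] [DecidableRel H.Adj]

theorem neighborFinset_cone_none : (cone H).neighborFinset none = univ.map .some := by
  ext (_ | a) <;> simp

theorem neighborFinset_cone_some (a : V) :
    (cone H).neighborFinset (some a) = (H.neighborFinset a).insertNone := by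
  ext (_ | b) <;> simp

theorem degree_cone_none : (cone H).degree none = Fintype.card V := by
  rw [← card_neighborFinset_eq_degree, neighborFinset_cone_none, card_map, card_univ]

theorem degree_cone_some (a : V) : (cone H).degree (some a) = H.degree a + 1 := by
  rw [← card_neighborFinset_eq_degree, neighborFinset_cone_some, card_insertNone,
    card_neighborFinset_eq_degree]

theorem degR_cone_none : degR (cone H) none = Fintype.card V := by
  rw [degR_eq, degree_cone_none]

variable {H} {k : ℕ}

theorem degR_cone_some (hH : H.IsRegularOfDegree k) (a : V) :
    degR (cone H) (some a) = k + 1 := by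
  rw [degR_eq, degree_cone_some, hH a, Nat.cast_succ]

theorem avgDegR_cone_none [Nonempty V] (hH : H.IsRegularOfDegree k) :
    avgDegR (cone H) none = k + 1 := by
  rw [avgDegR_eq, neighborFinset_cone_none, sum_map, Function.Embedding.some_apply]
  simp [degree_cone_some, hH _, degree_cone_none]
  field_simp

theorem avgDegR_cone_some (hH : H.IsRegularOfDegree k) (a : V) :
    avgDegR (cone H) (some a) = (Fintype.card V + k * (k + 1)) / (k + 1) := by
  rw [avgDegR_eq, neighborFinset_cone_some, sum_insertNone]
  simp [degree_cone_some, hH _, degree_cone_none]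
  ring

end SimpleGraph

open SimpleGraph

/-- There exists a finite simple connected graph `G` with at least two vertices whose
Laplacian spectral radius exceeds the conjectured edge-maximum bound. -/
theorem exists_counterexample_bound36 :
    ∃ (V : Type) (_ : Fintype V) (_ : DecidableEq V) (_ : Nonempty V)
      (G : SimpleGraph V), G.Connected ∧ 2 ≤ Fintype.card V ∧
      ∀ i j : V, G.Adj i j →
        (fun di mi dj mj => 2 * (mi ^ 2 + mj ^ 2) / (di + dj))
          (degR G i) (avgDegR G i) (degR G j) (avgDegR G j) < lapSpecRad G := by
  let H := circulantGraph (({1, 2, 3, 4, 5} : Finset (ZMod 28)) : Set (ZMod 28))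
  have hH : H.IsRegularOfDegree 10 := fun v => by revert v; decide
  have hμ : (29 : ℝ) ≤ lapSpecRad (cone H) := by
    simpa using card_le_lapSpecRad_of_isUniversal (isUniversal_cone_none H)
  refine ⟨_, inferInstance, inferInstance, inferInstance, cone H,
    .of_isUniversal (isUniversal_cone_none H), by simp, ?_⟩
  rintro (_ | a) (_ | b) hab
  · exact absurd hab (cone_adj_none_none H)
  all_goals
    refine lt_of_lt_of_le ?_ hμ
    simp only [degR_cone_none, degR_cone_some hH, avgDegR_cone_none hH, avgDegR_cone_some hH,
      ZMod.card]
    norm_num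
end
end

section
/- There exists a finite simple connected graph G with at least two vertices such that μ(G) > max over all pairs of adjacent vertices v_i ~ v_j of G of 2·(d_i² + d_j² + m_i·m_j − d_i·d_j)/(d_i + d_j). (This disproves conjectured edge-maximum bound 50 of Brankov, Hansen and Stevanović.) -/
/-!
A bipartite graph on ten vertices with degrees 2, 3 and 4 does it. The edge bound is at most
113/16 on each of its edges (attained where two vertices of degree 4 meet), while the Rayleigh
quotient of an integer approximation of the top Laplacian eigenvector gives
μ ≥ 3060/432 = 85/12 > 113/16.
-/

noncomputable section

open Finset

open Matrix SimpleGraph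

open scoped ComplexOrder MatrixOrder in
theorem Matrix.IsHermitian.star_dotProduct_mulVec_le {𝕜 n : Type*} [RCLike 𝕜] [Fintype n]
    [DecidableEq n] {A : Matrix n n 𝕜} (hA : A.IsHermitian) {r : ℝ}
    (hr : ∀ i, hA.eigenvalues i ≤ r) (x : n → 𝕜) :
    star x ⬝ᵥ A *ᵥ x ≤ r * (star x ⬝ᵥ x) := by
  have hle : A ≤ algebraMap ℝ (Matrix n n 𝕜) r :=
    le_algebraMap_of_spectrum_le (fun μ hμ ↦ by
      obtain ⟨i, rfl⟩ := hA.spectrum_real_eq_range_eigenvalues ▸ hμ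
      exact hr i) hA
  have := (Matrix.le_iff.mp hle).dotProduct_mulVec_nonneg x
  rw [Algebra.algebraMap_eq_smul_one, sub_mulVec, smul_mulVec, one_mulVec, dotProduct_sub,
    dotProduct_smul, sub_nonneg] at this
  simpa [RCLike.real_smul_eq_coe_mul] using this

section

variable {V : Type*} [Fintype V] (G : SimpleGraph V) [DecidableRel G.Adj]

theorem degR_eq_degree (v : V) : degR G v = G.degree v := by
  unfold degR
  congr!

theorem avgDegR_eq_sum_div_degree (v : V) :
    avgDegR G v = (∑ u ∈ G.neighborFinset v, (G.degree u : ℝ)) / G.degree v := by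
  unfold avgDegR
  congr!

theorem lapSpecRad_eq_iSup [DecidableEq V] [Nonempty V] :
    lapSpecRad G = ⨆ i, (posSemidef_lapMatrix ℝ G).isHermitian.eigenvalues i := by
  unfold lapSpecRad
  congr!

theorem sum_adj_sq_sub_div_two_le_lapSpecRad_mul [DecidableEq V] [Nonempty V] (x : V → ℝ) :
    (∑ i, ∑ j, if G.Adj i j then (x i - x j) ^ 2 else 0) / 2 ≤ lapSpecRad G * ∑ i, x i ^ 2 := by
  have h := (posSemidef_lapMatrix ℝ G).isHermitian.star_dotProduct_mulVec_le
    (fun i ↦ Finite.le_ciSup _ i) x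
  rw [star_trivial, ← lapSpecRad_eq_iSup, ← toLinearMap₂'_apply', lapMatrix_toLinearMap₂',
    dotProduct] at h
  simpa [sq] using h

end

theorem SimpleGraph.reachable_of_exists_adj_lt {V : Type*} [Preorder V] [WellFoundedLT V]
    {G : SimpleGraph V} {r : V} (h : ∀ v ≠ r, ∃ u < v, G.Adj v u) (v : V) :
    G.Reachable v r := by
  induction v using WellFoundedLT.induction with
  | _ v ih =>
    by_cases hv : v = r
    · exact hv ▸ .rfl
    · obtain ⟨u, hu, hadj⟩ := h v hv
      exact hadj.reachable.trans (ih u hu)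

theorem SimpleGraph.connected_of_exists_adj_lt {V : Type*} [Preorder V] [WellFoundedLT V]
    {G : SimpleGraph V} (r : V) (h : ∀ v ≠ r, ∃ u < v, G.Adj v u) : G.Connected :=
  (connected_iff_exists_forall_reachable G).mpr
    ⟨r, fun v ↦ (reachable_of_exists_adj_lt h v).symm⟩

def counterexampleEdges : List (Fin 10 × Fin 10) :=
  [(0,1), (0,2), (0,3), (0,8), (1,4), (1,5), (1,7), (2,4), (2,6), (3,4), (3,6), (4,8), (5,8),
    (5,9), (7,8), (7,9)]

def counterexampleGraph : SimpleGraph (Fin 10) :=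
  SimpleGraph.fromRel fun i j ↦ (i, j) ∈ counterexampleEdges

instance : DecidableRel counterexampleGraph.Adj := fun a b ↦
  decidable_of_iff _ (SimpleGraph.fromRel_adj _ a b).symm

namespace counterexampleGraph

theorem connected : counterexampleGraph.Connected :=
  connected_of_exists_adj_lt 0 (by decide)

theorem degree_eq : ∀ v, counterexampleGraph.degree v = ![4, 4, 3, 3, 4, 3, 2, 3, 4, 2] v := by
  decide

theorem sum_degree_neighbor_eq : ∀ v,
    ∑ u ∈ counterexampleGraph.neighborFinset v, counterexampleGraph.degree u =
      ![14, 14, 10, 10, 14, 10, 6, 10, 14, 6] v := by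
  decide

theorem degR_eq (v : Fin 10) :
    degR counterexampleGraph v = ![4, 4, 3, 3, 4, 3, 2, 3, 4, 2] v := by
  rw [degR_eq_degree, degree_eq]
  fin_cases v <;> norm_num

theorem avgDegR_eq (v : Fin 10) :
    avgDegR counterexampleGraph v = ![7/2, 7/2, 10/3, 10/3, 7/2, 10/3, 3, 10/3, 7/2, 3] v := by
  rw [avgDegR_eq_sum_div_degree, ← Nat.cast_sum, sum_degree_neighbor_eq, degree_eq]
  fin_cases v <;> norm_num

theorem edge_bound_le {i j : Fin 10} (hij : counterexampleGraph.Adj i j) :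
    2 * (degR counterexampleGraph i ^ 2 + degR counterexampleGraph j ^ 2
        + avgDegR counterexampleGraph i * avgDegR counterexampleGraph j
        - degR counterexampleGraph i * degR counterexampleGraph j)
      / (degR counterexampleGraph i + degR counterexampleGraph j) ≤ 113 / 16 := by
  rw [degR_eq, degR_eq, avgDegR_eq, avgDegR_eq]
  fin_cases i <;> fin_cases j <;> first | exact absurd hij (by decide) | norm_num

/-- An approximate top eigenvector of the Laplacian, scaled to integer entries. -/
def testVector : Fin 10 → ℝ := ![-9, 9, 5, 5, -9, -5, -2, -5, 9, 2]

theorem lapSpecRad_ge : (85 / 12 : ℝ) ≤ lapSpecRad counterexampleGraph := by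
  have h := sum_adj_sq_sub_div_two_le_lapSpecRad_mul counterexampleGraph testVector
  have hform : (∑ i, ∑ j, if counterexampleGraph.Adj i j then
      (testVector i - testVector j) ^ 2 else 0) / 2 = 3060 := by
    simp +decide [Fin.sum_univ_succ, testVector]
    norm_num
  have hnorm : ∑ i, testVector i ^ 2 = 432 := by
    simp [Fin.sum_univ_succ, testVector]
    norm_num
  rw [hform, hnorm] at h
  linarith

end counterexampleGraph

/-- There exists a finite simple connected graph `G` with at least two vertices whose
Laplacian spectral radius exceeds the conjectured edge-maximum bound. -/
theorem exists_counterexample_bound50 :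
    ∃ (V : Type) (_ : Fintype V) (_ : DecidableEq V) (_ : Nonempty V)
      (G : SimpleGraph V), G.Connected ∧ 2 ≤ Fintype.card V ∧
      ∀ i j : V, G.Adj i j →
        (fun di mi dj mj => 2 * (di ^ 2 + dj ^ 2 + mi * mj - di * dj) / (di + dj))
          (degR G i) (avgDegR G i) (degR G j) (avgDegR G j) < lapSpecRad G := by
  refine ⟨Fin 10, inferInstance, inferInstance, inferInstance, counterexampleGraph,
    counterexampleGraph.connected, by simp, fun i j hij ↦ ?_⟩
  calc _ ≤ (113 / 16 : ℝ) := counterexampleGraph.edge_bound_le hij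
    _ < 85 / 12 := by norm_num
    _ ≤ _ := counterexampleGraph.lapSpecRad_ge
end
end
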